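/- arXiv:2204.03622 — 3 statements merged into one kernel-verified Lean document; each statement's English description precedes it below -/
import Mathlib

section
/- Let g, h : [a,b] → ℝ be continuous functions with h Lipschitz, and let f = g + i·h : [a,b] → ℂ. Then the Hausdorff dimension of the graph of f equals the Hausdorff dimension of the graph of g. -/
/-!
The shear `(x, y) ↦ (x, y + k x)` by a function `k` that is Lipschitz on `s` is Lipschitz on
`s ×ˢ univ`, and so is its inverse, the shear by `-k`; hence it preserves the Hausdorff dimension of
graphs over `s`. The graph of `g + i h` is the shear by `i h` of the graph of `g` viewed in `ℂ`, and
`ℝ → ℂ` is an isometry.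
-/

open Set

section GraphOn

variable {α E F : Type*} [EMetricSpace α]

theorem dimH_graphOn_comp_of_isometry [EMetricSpace E] [EMetricSpace F] {e : E → F}
    (he : Isometry e) (g : α → E) (s : Set α) :
    dimH (s.graphOn (e ∘ g)) = dimH (s.graphOn g) := by
  rw [← (isometry_id.prodMap he).dimH_image (s.graphOn g), graphOn, graphOn, image_image]
  rfl

variable [NormedAddCommGroup E] {s : Set α} {k : α → E} {K : NNReal}

theorem dimH_graphOn_add_le (hk : LipschitzOnWith K k s) (g : α → E) :
    dimH (s.graphOn fun x => g x + k x) ≤ dimH (s.graphOn g) := by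
  have hshear : LipschitzOnWith (max 1 (1 + K * 1)) (fun p : α × E => (p.1, p.2 + k p.1))
      (s ×ˢ univ) :=
    LipschitzWith.prod_fst.lipschitzOnWith.prodMk <| LipschitzWith.prod_snd.lipschitzOnWith.add <|
      hk.comp LipschitzWith.prod_fst.lipschitzOnWith fun _ hp => hp.1
  have hgraph : s.graphOn (fun x => g x + k x) =
      (fun p : α × E => (p.1, p.2 + k p.1)) '' s.graphOn g := by
    rw [graphOn, graphOn, image_image]
  rw [hgraph]
  exact (hshear.mono fun p hp => ⟨(mem_graphOn.1 hp).1, trivial⟩).dimH_image_le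

theorem dimH_graphOn_add_eq (hk : LipschitzOnWith K k s) (g : α → E) :
    dimH (s.graphOn fun x => g x + k x) = dimH (s.graphOn g) := by
  refine (dimH_graphOn_add_le hk g).antisymm ?_
  simpa using dimH_graphOn_add_le hk.neg fun x => g x + k x

end GraphOn

theorem Complex.isometry_ofReal_mul_I : Isometry fun t : ℝ => (t : ℂ) * Complex.I :=
  Isometry.of_dist_eq fun x y => by
    rw [Complex.dist_eq, ← sub_mul, norm_mul, Complex.norm_I, mul_one, ← Complex.ofReal_sub,
      Complex.norm_real, Real.dist_eq, Real.norm_eq_abs]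

theorem dimH_graph_complex_eq_of_lipschitz_general (a b : ℝ) (g h : ℝ → ℝ)
    (C₁ : NNReal) (hLip : LipschitzOnWith C₁ h (Icc a b)) :
    dimH (Set.graphOn (fun x => (g x : ℂ) + h x * Complex.I) (Icc a b)) =
      dimH (Set.graphOn g (Icc a b)) :=
  (dimH_graphOn_add_eq (Complex.isometry_ofReal_mul_I.lipschitz.comp_lipschitzOnWith hLip) _).trans
    (dimH_graphOn_comp_of_isometry Complex.isometry_ofReal g _)

/-- if the imaginary part `h` is Lipschitz, then
dimH G(g + i h) = dimH G(g). -/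
theorem dimH_graph_complex_eq_of_lipschitz (a b : ℝ) (hab : a < b) (g h : ℝ → ℝ)
    (hg : ContinuousOn g (Icc a b)) (hh : ContinuousOn h (Icc a b))
    (C₁ : NNReal) (hLip : LipschitzOnWith C₁ h (Icc a b)) :
    dimH (Set.graphOn (fun x => (g x : ℂ) + h x * Complex.I) (Icc a b)) =
      dimH (Set.graphOn g (Icc a b)) :=
  dimH_graph_complex_eq_of_lipschitz_general a b g h C₁ hLip
end

section
/- Let {W₁,…,W_{N−1}} be an IFS on J × ℂ (J = [x₁, x_N] a compact interval, metric D((t₁,z₁),(t₂,z₂)) = |t₁−t₂| + |z₁−z₂|) whose attractor is the graph G of a continuous function, and suppose each Wₖ satisfies cₖ·D(p,q) ≤ D(Wₖ(p), Wₖ(q)) ≤ Cₖ·D(p,q) with 0 < cₖ ≤ Cₖ < 1. If the IFS satisfies the strong open set condition with the open set V = (x₁, x_N) × ℂ, then r ≤ dimH(G), where r is the unique solution of Σₖ cₖ^r = 1. -/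
open Set Filter

/-- The taxicab-type metric `D((t₁,z₁),(t₂,z₂)) = |t₁ - t₂| + |z₁ - z₂|` on `ℝ × ℂ`. -/
noncomputable def Dmetric (p q : ℝ × ℂ) : ℝ := |p.1 - q.1| + ‖p.2 - q.2‖

/-!
Fix a level `m` and cut the graph into the pieces `Φ_w(G)`, `Φ_w = W_{w₀} ∘ ⋯ ∘ W_{w_{m-1}}`.
Their projections to the first axis are nondegenerate intervals which, by the strong open set
condition, overlap at most in finitely many points; keeping every other one from left to right
gives a family of pieces at positive distance `δ` carrying at least half of the mass
`∑_w c_w ^ r = 1`. For `t < r` and `m` large, `c_w ^ t ≥ 2 c_w ^ r`, so `∑ c_w ^ t ≥ 1` over the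
kept words.

If a compact set `K` contains `δ`-separated images `T_j(K)` with lower Lipschitz constants `γ_j`
and `∑ γ_j ^ t ≥ 1`, then every finite cover of `K` has `∑ diam ^ t ≥ δ ^ t`: a set of the cover
either has diameter `≥ δ` or meets a single image, and pulling back the sets meeting `T_j(K)` by
`T_j` gives a smaller cover of `K`. By compactness this passes to countable covers, so the
`t`-dimensional Hausdorff measure of `K` is positive. The metric `D` is the `ℓ¹` product metric,
so the argument runs in `WithLp 1 (ℝ × ℂ)`.
-/

open Metric Topology Function
open scoped ENNReal NNReal

section PseudoEMetric

variable {X Y : Type*} [PseudoEMetricSpace X] [PseudoEMetricSpace Y]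

theorem mul_ediam_preimage_le {T : X → Y} {γ : ℝ≥0∞}
    (hT : ∀ p q, γ * edist p q ≤ edist (T p) (T q)) (U : Set Y) :
    γ * ediam (T ⁻¹' U) ≤ ediam U := by
  simp only [ediam, ENNReal.mul_iSup]
  exact iSup₂_le fun p hp => iSup₂_le fun q hq => (hT p q).trans (edist_le_ediam_of_mem hp hq)

theorem exists_isOpen_superset_ediam_rpow_le (U : Set X) {t : ℝ} (ht : 0 < t) {η : ℝ≥0∞}
    (hη : η ≠ 0) : ∃ V, IsOpen V ∧ U ⊆ V ∧ ediam V ^ t ≤ ediam U ^ t + η := by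
  rcases eq_top_or_lt_top (ediam U) with hU | hU
  · exact ⟨univ, isOpen_univ, subset_univ U, by simp [hU, ENNReal.top_rpow_of_pos ht]⟩
  have hcont : Continuous fun ε : ℝ≥0 => (ediam U + 2 * ε) ^ t :=
    ENNReal.continuous_rpow_const.comp
      (continuous_const.add ((ENNReal.continuous_const_mul (by norm_num)).comp
        ENNReal.continuous_coe))
  have hlt : (ediam U + 2 * ((0 : ℝ≥0) : ℝ≥0∞)) ^ t < ediam U ^ t + η := by
    simpa using ENNReal.lt_add_right (ENNReal.rpow_ne_top_of_nonneg ht.le hU.ne) hη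
  obtain ⟨ε, hε, hεpos⟩ := (((hcont.tendsto 0).eventually (gt_mem_nhds hlt)).filter_mono
    nhdsWithin_le_nhds |>.and (self_mem_nhdsWithin (s := Ioi (0 : ℝ≥0)))).exists
  exact ⟨thickening ε U, isOpen_thickening, self_subset_thickening hεpos U,
    (ENNReal.rpow_le_rpow (ediam_thickening_le ε) ht.le).trans hε.le⟩

theorem IsCompact.le_tsum_ediam_rpow_of_finite_covers {κ : Type*} [Countable κ] {K : Set X}
    (hK : IsCompact K) {t : ℝ} (ht : 0 < t) {a : ℝ≥0∞}
    (h : ∀ (s : Finset κ) (V : κ → Set X), K ⊆ ⋃ i ∈ s, V i → a ≤ ∑ i ∈ s, ediam (V i) ^ t)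
    (U : κ → Set X) (hU : K ⊆ ⋃ i, U i) : a ≤ ∑' i, ediam (U i) ^ t := by
  refine ENNReal.le_of_forall_pos_le_add fun η hη _ => ?_
  obtain ⟨η', hη'pos, hη'sum⟩ :=
    ENNReal.exists_pos_sum_of_countable (ENNReal.coe_ne_zero.2 hη.ne') κ
  choose V hVo hUV hV using fun i =>
    exists_isOpen_superset_ediam_rpow_le (U i) ht (ENNReal.coe_ne_zero.2 (hη'pos i).ne')
  obtain ⟨s, hs⟩ := hK.elim_finite_subcover V hVo (hU.trans (iUnion_mono hUV))
  calc a ≤ ∑ i ∈ s, ediam (V i) ^ t := h s V hs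
    _ ≤ ∑' i, ediam (V i) ^ t := ENNReal.sum_le_tsum s
    _ ≤ ∑' i, (ediam (U i) ^ t + η' i) := ENNReal.tsum_le_tsum hV
    _ = ∑' i, ediam (U i) ^ t + ∑' i, (η' i : ℝ≥0∞) := ENNReal.tsum_add
    _ ≤ ∑' i, ediam (U i) ^ t + η := by gcongr

variable {ι κ : Type*} [Nontrivial ι] {K : Set X} {T : ι → X → X} {γ : ι → ℝ≥0∞} {δ : ℝ≥0∞}
  {t : ℝ}

/-- `s' j` consists of the sets meeting `T j '' K`; having diameter `< δ`, none meets two of the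
images. -/
theorem exists_disjoint_ssubset_preimage_covers (hK : K.Nonempty) (hT : ∀ j, MapsTo (T j) K K)
    (hsep : Pairwise fun i j => ∀ p ∈ T i '' K, ∀ q ∈ T j '' K, δ ≤ edist p q)
    {s : Finset κ} {U : κ → Set X} (hU : K ⊆ ⋃ i ∈ s, U i) (hsmall : ∀ i ∈ s, ediam (U i) < δ) :
    ∃ s' : ι → Finset κ, Pairwise (Disjoint on s') ∧ (∀ j, s' j ⊂ s) ∧
      ∀ j, K ⊆ ⋃ i ∈ s' j, T j ⁻¹' U i := by
  classical
  set s' : ι → Finset κ := fun j => s.filter fun i => (U i ∩ T j '' K).Nonempty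
  have hdisj : Pairwise (Disjoint on s') := by
    refine fun j j' hjj' => Finset.disjoint_left.2 fun i hi hi' => ?_
    obtain ⟨his, p, hpU, hp⟩ := Finset.mem_filter.1 hi
    obtain ⟨-, q, hqU, hq⟩ := Finset.mem_filter.1 hi'
    exact (hsmall i his).not_ge ((hsep hjj' p hp q hq).trans (edist_le_ediam_of_mem hpU hqU))
  have hcover : ∀ j, K ⊆ ⋃ i ∈ s' j, T j ⁻¹' U i := by
    intro j p hp
    obtain ⟨i, hi, hpi⟩ := mem_iUnion₂.1 (hU (hT j hp))
    exact mem_iUnion₂.2 ⟨i, Finset.mem_filter.2 ⟨hi, T j p, hpi, mem_image_of_mem _ hp⟩, hpi⟩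
  refine ⟨s', hdisj, fun j => ?_, hcover⟩
  obtain ⟨j', hj'⟩ := exists_ne j
  obtain ⟨i, hi, -⟩ := mem_iUnion₂.1 (hcover j' hK.some_mem)
  have his := (Finset.mem_filter.1 hi).1
  exact Finset.filter_ssubset.2 ⟨i, his,
    fun h => Finset.disjoint_left.1 (hdisj hj') hi (Finset.mem_filter.2 ⟨his, h⟩)⟩

variable [Fintype ι]

theorem rpow_le_sum_ediam_rpow_of_subset_biUnion (hK : K.Nonempty) (hT : ∀ j, MapsTo (T j) K K)
    (hγ : ∀ j p q, γ j * edist p q ≤ edist (T j p) (T j q))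
    (hsep : Pairwise fun i j => ∀ p ∈ T i '' K, ∀ q ∈ T j '' K, δ ≤ edist p q)
    (ht : 0 ≤ t) (hsum : 1 ≤ ∑ j, γ j ^ t) (s : Finset κ) (U : κ → Set X)
    (hU : K ⊆ ⋃ i ∈ s, U i) : δ ^ t ≤ ∑ i ∈ s, ediam (U i) ^ t := by
  classical
  induction s using Finset.strongInduction generalizing U with
  | H s ih =>
  by_cases hbig : ∃ i ∈ s, δ ≤ ediam (U i)
  · obtain ⟨i, hi, hδi⟩ := hbig
    exact (ENNReal.rpow_le_rpow hδi ht).trans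
      (Finset.single_le_sum (f := fun i => ediam (U i) ^ t) (fun _ _ => zero_le) hi)
  push Not at hbig
  obtain ⟨s', hdisj, hssub, hcover⟩ := exists_disjoint_ssubset_preimage_covers hK hT hsep hU hbig
  have hpiece : ∀ j, γ j ^ t * δ ^ t ≤ ∑ i ∈ s' j, ediam (U i) ^ t := fun j =>
    calc γ j ^ t * δ ^ t ≤ γ j ^ t * ∑ i ∈ s' j, ediam (T j ⁻¹' U i) ^ t := by
          gcongr; exact ih _ (hssub j) _ (hcover j)
      _ = ∑ i ∈ s' j, (γ j * ediam (T j ⁻¹' U i)) ^ t := by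
          simp only [Finset.mul_sum, ENNReal.mul_rpow_of_nonneg _ _ ht]
      _ ≤ ∑ i ∈ s' j, ediam (U i) ^ t := Finset.sum_le_sum fun i _ =>
          ENNReal.rpow_le_rpow (mul_ediam_preimage_le (hγ j) _) ht
  calc δ ^ t ≤ (∑ j, γ j ^ t) * δ ^ t := le_mul_of_one_le_left' hsum
    _ = ∑ j, γ j ^ t * δ ^ t := Finset.sum_mul _ _ _
    _ ≤ ∑ j, ∑ i ∈ s' j, ediam (U i) ^ t := Finset.sum_le_sum fun j _ => hpiece j
    _ = ∑ i ∈ Finset.univ.biUnion s', ediam (U i) ^ t :=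
        (Finset.sum_biUnion (hdisj.set_pairwise _)).symm
    _ ≤ ∑ i ∈ s, ediam (U i) ^ t :=
        Finset.sum_le_sum_of_subset (Finset.biUnion_subset.2 fun j _ => (hssub j).subset)

end PseudoEMetric

section EMetric

open MeasureTheory

variable {X : Type*} [EMetricSpace X]

theorem IsCompact.hausdorffMeasure_ne_zero_of_finite_covers [MeasurableSpace X] [BorelSpace X]
    {K : Set X} (hK : IsCompact K) {t : ℝ} (ht : 0 < t) {a : ℝ≥0∞} (ha : a ≠ 0)
    (h : ∀ (s : Finset ℕ) (V : ℕ → Set X), K ⊆ ⋃ i ∈ s, V i → a ≤ ∑ i ∈ s, ediam (V i) ^ t) :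
    μH[t] K ≠ 0 := by
  refine (lt_of_lt_of_le (pos_iff_ne_zero.2 ha) ?_).ne'
  rw [Measure.hausdorffMeasure_apply]
  refine le_iSup₂_of_le 1 one_pos (le_iInf₂ fun U hU => le_iInf fun _ => ?_)
  refine (hK.le_tsum_ediam_rpow_of_finite_covers ht h U hU).trans
    (ENNReal.tsum_le_tsum fun i => ?_)
  rcases (U i).eq_empty_or_nonempty with hUi | hUi
  · simp [hUi, ENNReal.zero_rpow_of_pos ht]
  · exact le_iSup_of_le hUi le_rfl

variable {ι : Type*} [Fintype ι] [Nontrivial ι] {K : Set X} {T : ι → X → X} {γ : ι → ℝ≥0∞}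
  {δ : ℝ≥0∞} {t : ℝ}

theorem ofReal_le_dimH_of_separated_images (hK : IsCompact K) (hK' : K.Nonempty)
    (hT : ∀ j, MapsTo (T j) K K) (hγ : ∀ j p q, γ j * edist p q ≤ edist (T j p) (T j q))
    (hsep : Pairwise fun i j => ∀ p ∈ T i '' K, ∀ q ∈ T j '' K, δ ≤ edist p q) (hδ : δ ≠ 0)
    (ht : 0 < t) (hsum : 1 ≤ ∑ j, γ j ^ t) : ENNReal.ofReal t ≤ dimH K := by
  borelize X
  have hμ : μH[t] K ≠ 0 := hK.hausdorffMeasure_ne_zero_of_finite_covers ht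
    (by simp [hδ, ht.le]) fun s V hV =>
      rpow_le_sum_ediam_rpow_of_subset_biUnion hK' hT hγ hsep ht.le hsum s V hV
  rw [← Real.coe_toNNReal t ht.le] at hμ
  exact le_dimH_of_hausdorffMeasure_ne_zero hμ

end EMetric

section Dmetric

theorem dist_toLp_one_eq_Dmetric (p q : ℝ × ℂ) :
    dist (WithLp.toLp 1 p) (WithLp.toLp 1 q) = Dmetric p q := by
  rw [WithLp.prod_dist_eq_of_L1]
  simp [Dmetric, dist_eq_norm]

theorem abs_fst_sub_le_Dmetric (p q : ℝ × ℂ) : |p.1 - q.1| ≤ Dmetric p q :=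
  le_add_of_nonneg_right (norm_nonneg _)

theorem continuous_of_Dmetric_le {f : ℝ × ℂ → ℝ × ℂ} {L : ℝ}
    (hf : ∀ p q, Dmetric (f p) (f q) ≤ L * Dmetric p q) : Continuous f := by
  have hlip : LipschitzWith L.toNNReal fun z : WithLp 1 (ℝ × ℂ) => WithLp.toLp 1 (f z.ofLp) :=
    LipschitzWith.of_dist_le' fun z z' => by
      simpa only [← dist_toLp_one_eq_Dmetric, WithLp.toLp_ofLp] using hf z.ofLp z'.ofLp
  exact (WithLp.prod_lipschitzWith_ofLp 1 ℝ ℂ).continuous.comp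
    (hlip.continuous.comp (WithLp.prod_lipschitzWith_toLp 1 ℝ ℂ).continuous)

theorem injective_of_mul_Dmetric_le {f : ℝ × ℂ → ℝ × ℂ} {c : ℝ} (hc : 0 < c)
    (hf : ∀ p q, c * Dmetric p q ≤ Dmetric (f p) (f q)) : Injective f := by
  intro p q hpq
  have h : c * dist (WithLp.toLp 1 p) (WithLp.toLp 1 q) ≤ 0 := by
    simpa [dist_toLp_one_eq_Dmetric, hpq, Dmetric] using hf p q
  exact WithLp.toLp_injective 1 (dist_le_zero.1 (nonpos_of_mul_nonpos_right h hc))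

theorem ofReal_le_dimH_of_separated_Dmetric {ι : Type*} {A : Finset ι} (hA : A.Nontrivial)
    {K : Set (ℝ × ℂ)} (hK : IsCompact K) (hK' : K.Nonempty) {T : ι → ℝ × ℂ → ℝ × ℂ}
    {γ : ι → ℝ} (hγ : ∀ j ∈ A, 0 ≤ γ j) (hT : ∀ j ∈ A, MapsTo (T j) K K)
    (hlow : ∀ j ∈ A, ∀ p q, γ j * Dmetric p q ≤ Dmetric (T j p) (T j q)) {δ : ℝ} (hδ : 0 < δ)
    (hsep : ∀ i ∈ A, ∀ j ∈ A, i ≠ j → ∀ p ∈ T i '' K, ∀ q ∈ T j '' K, δ ≤ Dmetric p q) {t : ℝ}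
    (ht : 0 < t) (hsum : 1 ≤ ∑ j ∈ A, γ j ^ t) : ENNReal.ofReal t ≤ dimH K := by
  have : Nontrivial A := hA.coe_sort
  have hedist : ∀ p q : ℝ × ℂ,
      edist (WithLp.toLp 1 p) (WithLp.toLp 1 q) = ENNReal.ofReal (Dmetric p q) := fun p q => by
    rw [edist_dist, dist_toLp_one_eq_Dmetric]
  have hcont := (WithLp.prod_lipschitzWith_toLp 1 ℝ ℂ).continuous
  refine le_trans ?_ ((WithLp.prod_lipschitzWith_toLp 1 ℝ ℂ).dimH_image_le K)
  refine ofReal_le_dimH_of_separated_images (hK.image hcont) (hK'.image _)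
    (T := fun (j : A) z => WithLp.toLp 1 (T j z.ofLp)) (γ := fun j => ENNReal.ofReal (γ j))
    (δ := ENNReal.ofReal δ) ?_ ?_ ?_ (by simpa using hδ) ht ?_
  · rintro j _ ⟨p, hp, rfl⟩
    exact mem_image_of_mem _ (hT j j.2 hp)
  · rintro j ⟨p⟩ ⟨q⟩
    simpa only [hedist, ← ENNReal.ofReal_mul (hγ j j.2)] using
      ENNReal.ofReal_le_ofReal (hlow j j.2 p q)
  · rintro i j hij _ ⟨_, ⟨p, hp, rfl⟩, rfl⟩ _ ⟨_, ⟨q, hq, rfl⟩, rfl⟩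
    simpa only [hedist] using ENNReal.ofReal_le_ofReal (hsep i i.2 j j.2
      (Subtype.coe_injective.ne hij) _ (mem_image_of_mem _ hp) _ (mem_image_of_mem _ hq))
  · calc (1 : ℝ≥0∞) ≤ ENNReal.ofReal (∑ j ∈ A, γ j ^ t) := by
          simpa using ENNReal.ofReal_le_ofReal hsum
      _ = ∑ j : A, ENNReal.ofReal (γ j) ^ t := by
        rw [ENNReal.ofReal_sum_of_nonneg fun j hj => Real.rpow_nonneg (hγ j hj) t,
          ← Finset.sum_coe_sort]
        exact Finset.sum_congr rfl fun j _ => (ENNReal.ofReal_rpow_of_nonneg (hγ j j.2) ht.le).symm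

end Dmetric

section Words

variable {X ι : Type*}

/-- `wordMap W w = W (w 0) ∘ W (w 1) ∘ ⋯ ∘ W (w (m - 1))`. -/
def wordMap (W : ι → X → X) : {m : ℕ} → (Fin m → ι) → X → X
  | 0, _ => id
  | _ + 1, w => W (w 0) ∘ wordMap W (Fin.tail w)

variable {W : ι → X → X}

theorem mapsTo_wordMap {G : Set X} (hW : ∀ k, MapsTo (W k) G G) :
    ∀ {m : ℕ} (w : Fin m → ι), MapsTo (wordMap W w) G G
  | 0, _ => mapsTo_id G
  | _ + 1, w => (hW (w 0)).comp (mapsTo_wordMap hW (Fin.tail w))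

theorem continuous_wordMap [TopologicalSpace X] (hW : ∀ k, Continuous (W k)) :
    ∀ {m : ℕ} (w : Fin m → ι), Continuous (wordMap W w)
  | 0, _ => continuous_id
  | _ + 1, w => (hW (w 0)).comp (continuous_wordMap hW (Fin.tail w))

theorem injective_wordMap (hW : ∀ k, Injective (W k)) :
    ∀ {m : ℕ} (w : Fin m → ι), Injective (wordMap W w)
  | 0, _ => injective_id
  | _ + 1, w => (hW (w 0)).comp (injective_wordMap hW (Fin.tail w))

theorem prod_mul_le_wordMap {d : X → X → ℝ} {γ : ι → ℝ} (hγ : ∀ k, 0 ≤ γ k)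
    (hW : ∀ k p q, γ k * d p q ≤ d (W k p) (W k q)) :
    ∀ {m : ℕ} (w : Fin m → ι) (p q : X),
      (∏ i, γ (w i)) * d p q ≤ d (wordMap W w p) (wordMap W w q)
  | 0, _, p, q => by simp [wordMap]
  | _ + 1, w, p, q =>
    calc (∏ i, γ (w i)) * d p q = γ (w 0) * ((∏ i, γ (Fin.tail w i)) * d p q) := by
          rw [Fin.prod_univ_succ, mul_assoc]; rfl
      _ ≤ γ (w 0) * d (wordMap W (Fin.tail w) p) (wordMap W (Fin.tail w) q) :=
          mul_le_mul_of_nonneg_left (prod_mul_le_wordMap hγ hW (Fin.tail w) p q) (hγ _)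
      _ ≤ d (wordMap W w p) (wordMap W w q) := hW _ _ _

theorem finite_image_wordMap_inter {G V : Set X} (hinj : ∀ k, Injective (W k))
    (hW : ∀ k, MapsTo (W k) G G) (hGV : (G \ V).Finite)
    (hdisj : Pairwise fun i j => Disjoint (W i '' V) (W j '' V)) :
    ∀ {m : ℕ} {w w' : Fin m → ι}, w ≠ w' → (wordMap W w '' G ∩ wordMap W w' '' G).Finite
  | 0, w, w', hne => absurd (Subsingleton.elim w w') hne
  | m + 1, w, w', hne => by
    simp only [wordMap, image_comp]
    by_cases h0 : w 0 = w' 0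
    · have htail : Fin.tail w ≠ Fin.tail w' := fun h =>
        hne (by rw [← Fin.cons_self_tail w, ← Fin.cons_self_tail w', h0, h])
      rw [h0, ← image_inter (hinj _)]
      exact (finite_image_wordMap_inter hinj hW hGV hdisj htail).image _
    · refine ((hGV.image (W (w 0))).union (hGV.image (W (w' 0)))).subset ?_
      rintro _ ⟨⟨u, hu, rfl⟩, ⟨u', hu', hEq⟩⟩
      have huG := (mapsTo_wordMap hW (Fin.tail w)).image_subset hu
      have hu'G := (mapsTo_wordMap hW (Fin.tail w')).image_subset hu'
      by_cases huV : u ∈ V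
      · by_cases hu'V : u' ∈ V
        · exact absurd (hdisj h0) (not_disjoint_iff.2
            ⟨_, mem_image_of_mem _ huV, hEq ▸ mem_image_of_mem _ hu'V⟩)
        · exact Or.inr (hEq ▸ mem_image_of_mem _ ⟨hu'G, hu'V⟩)
      · exact Or.inl (mem_image_of_mem _ ⟨huG, huV⟩)

end Words

section Selection

variable {κ : Type*} [Fintype κ]

def orderRank {L : Type*} [LinearOrder L] (a : κ → L) (i : κ) : ℕ :=
  (Finset.univ.filter fun j => a j < a i).card

variable {L : Type*} [LinearOrder L] {a : κ → L} {i j : κ}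

theorem orderRank_lt_orderRank (h : a i < a j) : orderRank a i < orderRank a j := by
  refine Finset.card_lt_card (Finset.ssubset_iff_of_subset ?_ |>.2 ⟨i, ?_, ?_⟩) <;>
    simp_all [Finset.subset_iff, lt_trans _ h]

theorem exists_between_of_orderRank_add_two_le (ha : Injective a)
    (h : orderRank a i + 2 ≤ orderRank a j) : ∃ k, a i < a k ∧ a k < a j := by
  classical
  by_contra! hk
  have hsub : (Finset.univ.filter fun k => a k < a j) ⊆
      insert i (Finset.univ.filter fun k => a k < a i) := by
    intro k hkj
    simp only [Finset.mem_filter, Finset.mem_univ, true_and] at hkj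
    rcases lt_or_eq_of_le (not_lt.1 fun hik => (hk k hik).not_gt hkj) with hki | hki
    · exact Finset.mem_insert_of_mem (by simpa using hki)
    · exact Finset.mem_insert.2 (Or.inl (ha hki))
  have := (Finset.card_le_card hsub).trans (Finset.card_insert_le _ _)
  unfold orderRank at h
  omega

theorem exists_sum_le_two_mul_sum_of_parity (f : κ → ℝ) (g : κ → ℕ) :
    ∃ A : Finset κ, ∑ i, f i ≤ 2 * ∑ i ∈ A, f i ∧
      ∀ i ∈ A, ∀ j ∈ A, g i < g j → g i + 2 ≤ g j := by
  classical
  have hsplit := Finset.sum_filter_add_sum_filter_not Finset.univ (fun i => Even (g i)) f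
  rcases le_total (∑ i ∈ Finset.univ.filter fun i => ¬Even (g i), f i)
      (∑ i ∈ Finset.univ.filter fun i => Even (g i), f i) with h | h
  · refine ⟨Finset.univ.filter fun i => Even (g i), by linarith, fun i hi j hj hij => ?_⟩
    simp only [Finset.mem_filter, Finset.mem_univ, true_and, Nat.even_iff] at hi hj
    omega
  · refine ⟨Finset.univ.filter fun i => ¬Even (g i), by linarith, fun i hi j hj hij => ?_⟩
    simp only [Finset.mem_filter, Finset.mem_univ, true_and, Nat.even_iff] at hi hj
    omega

/-- Keep every other interval from left to right: the gap between two kept intervals contains a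
whole interval of the family. -/
theorem exists_separated_sum_le_two_mul_sum {α β : κ → ℝ} (hαβ : ∀ i, α i < β i)
    (hdisj : Pairwise fun i j => β i ≤ α j ∨ β j ≤ α i) (f : κ → ℝ) :
    ∃ A : Finset κ, ∑ i, f i ≤ 2 * ∑ i ∈ A, f i ∧
      ∃ δ > 0, ∀ i ∈ A, ∀ j ∈ A, α i < α j → β i + δ ≤ α j := by
  have hinj : Injective α := fun i j h => by
    by_contra hij
    rcases hdisj hij with h' | h' <;> linarith [hαβ i, hαβ j]
  obtain ⟨A, hA, hgap⟩ := exists_sum_le_two_mul_sum_of_parity f (orderRank α)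
  obtain ⟨δ, hδle, hδ⟩ := ((eventually_all.2 fun k => eventually_lt_nhds (sub_pos.2 (hαβ k)))
    |>.filter_mono nhdsWithin_le_nhds |>.and (self_mem_nhdsWithin (s := Ioi (0 : ℝ)))).exists
  refine ⟨A, hA, δ, hδ, fun i hi j hj hij => ?_⟩
  obtain ⟨k, hik, hkj⟩ := exists_between_of_orderRank_add_two_le hinj
    (hgap i hi j hj (orderRank_lt_orderRank hij))
  have hβi : β i ≤ α k := (hdisj (hinj.ne_iff.1 hik.ne)).resolve_right (by linarith [hαβ k])
  have hβk : β k ≤ α j := (hdisj (hinj.ne_iff.1 hkj.ne)).resolve_right (by linarith [hαβ j])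
  linarith [hδle k]

end Selection

section Pieces

variable {Y : Type*} [TopologicalSpace Y]

theorem exists_image_fst_eq_Icc {S : Set (ℝ × Y)} (hc : IsCompact S) (hconn : IsConnected S)
    (hinj : InjOn Prod.fst S) (hnt : S.Nontrivial) :
    ∃ α β, α < β ∧ Prod.fst '' S = Icc α β := by
  have hS := eq_Icc_of_connected_compact (hconn.image _ continuous_fst.continuousOn)
    (hc.image continuous_fst)
  refine ⟨_, _, ?_, hS⟩
  obtain ⟨p, hp, q, hq, hpq⟩ := hnt
  have hp' : p.1 ∈ Icc _ _ := hS ▸ mem_image_of_mem _ hp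
  have hq' : q.1 ∈ Icc _ _ := hS ▸ mem_image_of_mem _ hq
  by_contra! hle
  exact hpq (hinj hp hq (by linarith [hp'.1, hp'.2, hq'.1, hq'.2]))

theorem le_or_le_of_finite_Icc_inter_Icc {L : Type*} [LinearOrder L] [DenselyOrdered L]
    {α β α' β' : L} (h : (Icc α β ∩ Icc α' β').Finite) (hαβ : α < β) (hαβ' : α' < β') :
    β ≤ α' ∨ β' ≤ α := by
  by_contra! hlt
  rw [Icc_inter_Icc] at h
  exact Icc_infinite (max_lt (lt_min hαβ hlt.2) (lt_min hlt.1 hαβ')) h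

theorem exists_separated_pieces {G : Set (ℝ × Y)} (hGc : IsCompact G) (hGconn : IsConnected G)
    (hGinj : InjOn Prod.fst G) (hGnt : G.Nontrivial) {κ : Type*} [Fintype κ]
    {Φ : κ → ℝ × Y → ℝ × Y} (hcont : ∀ i, ContinuousOn (Φ i) G) (hinj : ∀ i, InjOn (Φ i) G)
    (hmaps : ∀ i, MapsTo (Φ i) G G) (hfin : Pairwise fun i j => (Φ i '' G ∩ Φ j '' G).Finite)
    (f : κ → ℝ) :
    ∃ A : Finset κ, ∑ i, f i ≤ 2 * ∑ i ∈ A, f i ∧ ∃ δ > 0, ∀ i ∈ A, ∀ j ∈ A, i ≠ j →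
      ∀ p ∈ Φ i '' G, ∀ q ∈ Φ j '' G, δ ≤ |p.1 - q.1| := by
  choose α β hαβ hI using fun i => exists_image_fst_eq_Icc (hGc.image_of_continuousOn (hcont i))
    (hGconn.image _ (hcont i)) (hGinj.mono (hmaps i).image_subset) (hGnt.image_of_injOn (hinj i))
  have hdisj : Pairwise fun i j => β i ≤ α j ∨ β j ≤ α i := fun i j hij => by
    refine le_or_le_of_finite_Icc_inter_Icc ?_ (hαβ i) (hαβ j)
    rw [← hI, ← hI, ← hGinj.image_inter (hmaps i).image_subset (hmaps j).image_subset]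
    exact (hfin hij).image _
  obtain ⟨A, hA, δ, hδ, hsep⟩ := exists_separated_sum_le_two_mul_sum hαβ hdisj f
  refine ⟨A, hA, δ, hδ, fun i hi j hj hij p hp q hq => ?_⟩
  have hp' : p.1 ∈ Icc (α i) (β i) := hI i ▸ mem_image_of_mem _ hp
  have hq' : q.1 ∈ Icc (α j) (β j) := hI j ▸ mem_image_of_mem _ hq
  have hne : α i ≠ α j := fun h => by rcases hdisj hij with h' | h' <;> linarith [hαβ i, hαβ j]
  rcases hne.lt_or_gt with h | h
  · exact le_abs.2 (Or.inr (by linarith [hsep i hi j hj h, hp'.2, hq'.1]))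
  · exact le_abs.2 (Or.inl (by linarith [hsep j hj i hi h, hp'.1, hq'.2]))

end Pieces

section Graph

variable {Y : Type*} {F : ℝ → Y} {a b : ℝ}

theorem isCompact_graphOn_Icc [TopologicalSpace Y] (hF : ContinuousOn F (Icc a b)) :
    IsCompact (graphOn F (Icc a b)) :=
  isCompact_Icc.image_of_continuousOn (continuousOn_id.prodMk hF)

theorem isConnected_graphOn_Icc [TopologicalSpace Y] (hab : a ≤ b)
    (hF : ContinuousOn F (Icc a b)) : IsConnected (graphOn F (Icc a b)) :=
  (isConnected_Icc hab).image _ (continuousOn_id.prodMk hF)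

theorem nontrivial_graphOn_Icc (hab : a < b) (F : ℝ → Y) : (graphOn F (Icc a b)).Nontrivial :=
  ⟨_, mem_image_of_mem _ (left_mem_Icc.2 hab.le), _, mem_image_of_mem _ (right_mem_Icc.2 hab.le),
    by simp [hab.ne]⟩

theorem finite_graphOn_Icc_diff (F : ℝ → Y) (a b : ℝ) :
    (graphOn F (Icc a b) \ Ioo a b ×ˢ univ).Finite := by
  refine ((toFinite {a, b}).image fun u => (u, F u)).subset ?_
  rintro _ ⟨⟨u, hu, rfl⟩, huV⟩
  refine mem_image_of_mem _ ?_
  rw [← Icc_sdiff_Ioo_same (hu.1.trans hu.2)]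
  exact ⟨hu, fun h => huV ⟨h, trivial⟩⟩

end Graph

section Weights

variable {ι : Type*} {c : ι → ℝ}

theorem sum_prod_rpow_eq_pow_sum [Fintype ι] (hc : ∀ k, 0 ≤ c k) (r : ℝ) (m : ℕ) :
    ∑ w : Fin m → ι, (∏ i, c (w i)) ^ r = (∑ k, c k ^ r) ^ m := by
  classical
  rw [← Fin.prod_const, Fintype.prod_sum]
  exact Finset.sum_congr rfl fun w _ => (Real.finsetProd_rpow _ _ (fun i _ => hc (w i)) r).symm

theorem eventually_forall_prod_rpow_lt [Finite ι] (hc0 : ∀ k, 0 ≤ c k) (hc1 : ∀ k, c k < 1)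
    {s η : ℝ} (hs : 0 < s) (hη : 0 < η) :
    ∀ᶠ m in atTop, ∀ w : Fin m → ι, (∏ i, c (w i)) ^ s < η := by
  obtain ⟨ρ, hρc, hρ⟩ :=
    ((eventually_all.2 fun k => Ioo_mem_nhdsLT (hc1 k)).and (Ioo_mem_nhdsLT one_pos)).exists
  have hlim : Tendsto (fun m : ℕ => (ρ ^ m) ^ s) atTop (𝓝 0) := by
    simpa [Real.zero_rpow hs.ne'] using
      (tendsto_pow_atTop_nhds_zero_of_lt_one hρ.1.le hρ.2).rpow_const (Or.inr hs.le)
  filter_upwards [hlim.eventually (gt_mem_nhds hη)] with m hm w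
  refine lt_of_le_of_lt (Real.rpow_le_rpow (Finset.prod_nonneg fun i _ => hc0 _) ?_ hs.le) hm
  calc ∏ i, c (w i) ≤ ∏ _i : Fin m, ρ :=
        Finset.prod_le_prod (fun i _ => hc0 _) fun i _ => (hρc (w i)).1.le
    _ = ρ ^ m := Fin.prod_const m ρ

theorem one_le_sum_rpow_of_le_two_mul_sum [Fintype ι] {g : ι → ℝ} {r t : ℝ} {A : Finset ι}
    (hg : ∀ i ∈ A, 0 < g i) (hsmall : ∀ i ∈ A, g i ^ (r - t) ≤ 1 / 2) (hr : ∑ i, g i ^ r = 1)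
    (hA : ∑ i, g i ^ r ≤ 2 * ∑ i ∈ A, g i ^ r) : 1 ≤ ∑ i ∈ A, g i ^ t := by
  have hboost : ∀ i ∈ A, 2 * g i ^ r ≤ g i ^ t := fun i hi => by
    have hsplit : g i ^ r = g i ^ (r - t) * g i ^ t := by
      rw [← Real.rpow_add (hg i hi), sub_add_cancel]
    nlinarith [Real.rpow_pos_of_pos (hg i hi) t, hsmall i hi]
  calc 1 ≤ 2 * ∑ i ∈ A, g i ^ r := hr ▸ hA
    _ = ∑ i ∈ A, 2 * g i ^ r := Finset.mul_sum _ _ _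
    _ ≤ ∑ i ∈ A, g i ^ t := Finset.sum_le_sum hboost

theorem Finset.nontrivial_of_one_le_sum {A : Finset ι} {f : ι → ℝ} (hf : ∀ i ∈ A, f i < 1)
    (h : 1 ≤ ∑ i ∈ A, f i) : A.Nontrivial := by
  rcases A.eq_empty_or_nonempty with rfl | hA
  · simp only [Finset.sum_empty] at h; linarith
  rcases hA.exists_eq_singleton_or_nontrivial with ⟨i, rfl⟩ | hA
  · simp only [Finset.sum_singleton] at h
    linarith [hf i (Finset.mem_singleton_self i)]
  · exact hA

end Weights

theorem ENNReal.ofReal_le_of_forall_lt {r : ℝ} {d : ℝ≥0∞}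
    (h : ∀ t, 0 < t → t < r → ENNReal.ofReal t ≤ d) : ENNReal.ofReal r ≤ d := by
  refine le_of_forall_lt fun e he => ?_
  obtain ⟨t, -, het, htr⟩ := ENNReal.lt_iff_exists_real_btwn.1 he
  exact het.trans_le (h t (ENNReal.ofReal_pos.1 (zero_le.trans_lt het))
    (ENNReal.ofReal_lt_ofReal_iff'.1 htr).1)

theorem dimH_attractor_lower_bound_general
    (n : ℕ) (hn : 1 ≤ n) (x : Fin (n + 1) → ℝ) (hx : StrictMono x)
    (W : Fin n → ℝ × ℂ → ℝ × ℂ) (c C : Fin n → ℝ)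
    (hc : ∀ k, 0 < c k) (hcC : ∀ k, c k ≤ C k) (hC : ∀ k, C k < 1)
    (hbilip : ∀ k, ∀ p q : ℝ × ℂ,
      c k * Dmetric p q ≤ Dmetric (W k p) (W k q) ∧
      Dmetric (W k p) (W k q) ≤ C k * Dmetric p q)
    (F : ℝ → ℂ) (hF : ContinuousOn F (Icc (x 0) (x (Fin.last n))))
    (G : Set (ℝ × ℂ)) (hG : G = Set.graphOn F (Icc (x 0) (x (Fin.last n))))
    (hattr : G = ⋃ k, W k '' G)
    (V : Set (ℝ × ℂ)) (hV : V = Ioo (x 0) (x (Fin.last n)) ×ˢ (univ : Set ℂ))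
    (hVdisj : Pairwise fun i j => Disjoint (W i '' V) (W j '' V))
    (r : ℝ) (hr : ∑ k, c k ^ r = 1) :
    ENNReal.ofReal r ≤ dimH G := by
  have hab : x 0 < x (Fin.last n) := hx (by simp only [Fin.lt_def, Fin.val_zero, Fin.val_last]; omega)
  have hGc : IsCompact G := hG ▸ isCompact_graphOn_Icc hF
  have hGnt : G.Nontrivial := hG ▸ nontrivial_graphOn_Icc hab F
  have hmaps : ∀ k, MapsTo (W k) G G := fun k p hp => by
    rw [hattr]; exact mem_iUnion_of_mem k (mem_image_of_mem _ hp)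
  have hcont k : Continuous (W k) := continuous_of_Dmetric_le fun p q => (hbilip k p q).2
  have hinj k : Injective (W k) := injective_of_mul_Dmetric_le (hc k) fun p q => (hbilip k p q).1
  have hGV : (G \ V).Finite := by subst hG hV; exact finite_graphOn_Icc_diff F _ _
  refine ENNReal.ofReal_le_of_forall_lt fun t ht htr => ?_
  have hc0 k : 0 ≤ c k := (hc k).le
  have hc1 k : c k < 1 := (hcC k).trans_lt (hC k)
  obtain ⟨m, hmrt, hmt⟩ := ((eventually_forall_prod_rpow_lt hc0 hc1 (sub_pos.2 htr)
    one_half_pos).and (eventually_forall_prod_rpow_lt hc0 hc1 ht one_pos)).exists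
  have hg (w : Fin m → Fin n) : 0 < ∏ i, c (w i) := Finset.prod_pos fun i _ => hc (w i)
  obtain ⟨A, hA, δ, hδ, hsep⟩ := exists_separated_pieces hGc
    (hG ▸ isConnected_graphOn_Icc hab.le hF) (hG ▸ fst_injOn_graph) hGnt
    (fun w => (continuous_wordMap hcont w).continuousOn) (fun w => (injective_wordMap hinj w).injOn)
    (mapsTo_wordMap hmaps) (fun w w' => finite_image_wordMap_inter hinj hmaps hGV hVdisj)
    fun w => (∏ i, c (w i)) ^ r
  have hAt := one_le_sum_rpow_of_le_two_mul_sum (fun w _ => hg w) (fun w _ => (hmrt w).le)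
    (by rw [sum_prod_rpow_eq_pow_sum hc0, hr, one_pow]) hA
  exact ofReal_le_dimH_of_separated_Dmetric
    (Finset.nontrivial_of_one_le_sum (fun w _ => hmt w) hAt) hGc hGnt.nonempty
    (fun w _ => (hg w).le) (fun w _ => mapsTo_wordMap hmaps w)
    (fun w _ => prod_mul_le_wordMap hc0 (fun k p q => (hbilip k p q).1) w) hδ
    (fun i hi j hj hij p hp q hq => (hsep i hi j hj hij p hp q hq).trans
      (abs_fst_sub_le_Dmetric p q)) ht hAt

/-- lower bound for the Hausdorff dimension of the attractor (the graph
of a continuous function) of an IFS on `J × ℂ` satisfying bi-Lipschitz bounds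
`cₖ D(p,q) ≤ D(Wₖ p, Wₖ q) ≤ Cₖ D(p,q)` and the strong open set condition with
`V = (x₁, x_N) × ℂ` : if `∑ₖ cₖ ^ r = 1` then `r ≤ dimH G`. -/
theorem dimH_attractor_lower_bound
    (n : ℕ) (hn : 1 ≤ n) (x : Fin (n + 1) → ℝ) (hx : StrictMono x)
    (W : Fin n → ℝ × ℂ → ℝ × ℂ) (c C : Fin n → ℝ)
    (hc : ∀ k, 0 < c k) (hcC : ∀ k, c k ≤ C k) (hC : ∀ k, C k < 1)
    (hbilip : ∀ k, ∀ p q : ℝ × ℂ,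
      c k * Dmetric p q ≤ Dmetric (W k p) (W k q) ∧
      Dmetric (W k p) (W k q) ≤ C k * Dmetric p q)
    (F : ℝ → ℂ) (hF : ContinuousOn F (Icc (x 0) (x (Fin.last n))))
    (G : Set (ℝ × ℂ)) (hG : G = Set.graphOn F (Icc (x 0) (x (Fin.last n))))
    (hattr : G = ⋃ k, W k '' G)
    (V : Set (ℝ × ℂ)) (hV : V = Ioo (x 0) (x (Fin.last n)) ×ˢ (univ : Set ℂ))
    (hVsub : ∀ k, W k '' V ⊆ V)
    (hVdisj : Pairwise fun i j => Disjoint (W i '' V) (W j '' V))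
    (hVG : (V ∩ G).Nonempty)
    (r : ℝ) (hr : ∑ k, c k ^ r = 1) :
    ENNReal.ofReal r ≤ dimH G :=
  dimH_attractor_lower_bound_general n hn x hx W c C hc hcC hC hbilip F hF G hG hattr V hV hVdisj r
    hr
end

section
/- Under the same hypotheses (bi-Lipschitz bounds cₖ·D(p,q) ≤ D(Wₖ(p),Wₖ(q)) ≤ Cₖ·D(p,q) with 0 < cₖ ≤ Cₖ < 1), the attractor G of the IFS satisfies dimH(G) ≤ R, where R is the unique solution of Σₖ Cₖ^R = 1. -/
/-!
Iterating `G = ⋃ₖ Wₖ(G)` `m` times covers `G` by the images `W_w(G)` along the words `w` of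
length `m`, and `diam W_w(G) ≤ C_{w₁} ⋯ C_{wₘ} · diam G`. Hence
`∑_w (diam W_w(G))^R ≤ (∑ₖ Cₖ^R)^m (diam G)^R = (diam G)^R` while the mesh of these covers tends
to zero, so the `R`-dimensional Hausdorff measure of `G` is finite. The metric `D` is the `ℓ¹`
metric of `WithLp 1 (ℝ × ℂ)`, which is bi-Lipschitz equivalent to the product metric.
-/

open Set Filter

open Metric Topology WithLp
open scoped ENNReal NNReal MeasureTheory

section Cylinder

variable {X ι : Type*}

/-- The image of `s` under `f (w 0) ∘ ⋯ ∘ f (w (m - 1))`. -/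
def cylinder (f : ι → X → X) (s : Set X) : (m : ℕ) → (Fin m → ι) → Set X
  | 0, _ => s
  | m + 1, w => f (w 0) '' cylinder f s m (Fin.tail w)

theorem cylinder_cons (f : ι → X → X) (s : Set X) {m : ℕ} (k : ι) (w : Fin m → ι) :
    cylinder f s (m + 1) (Fin.cons k w) = f k '' cylinder f s m w := by
  simp only [cylinder, Fin.cons_zero, Fin.tail_cons]

theorem subset_iUnion_cylinder {f : ι → X → X} {s : Set X} (h : s ⊆ ⋃ k, f k '' s) :
    ∀ m, s ⊆ ⋃ w : Fin m → ι, cylinder f s m w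
  | 0 => fun _ hx => mem_iUnion.2 ⟨Fin.elim0, hx⟩
  | m + 1 => fun x hx => by
    obtain ⟨k, y, hy, rfl⟩ : ∃ k, ∃ y ∈ s, f k y = x := by simpa using h hx
    obtain ⟨w, hw⟩ := mem_iUnion.1 (subset_iUnion_cylinder h m hy)
    exact mem_iUnion.2 ⟨Fin.cons k w, cylinder_cons f s k w ▸ mem_image_of_mem _ hw⟩

variable [EMetricSpace X] {f : ι → X → X} {K : ι → ℝ≥0}

theorem ediam_cylinder_le (hf : ∀ k, LipschitzWith (K k) (f k)) (s : Set X) :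
    ∀ {m} (w : Fin m → ι), ediam (cylinder f s m w) ≤ (∏ i, (K (w i) : ℝ≥0∞)) * ediam s
  | 0, _ => by simp [cylinder]
  | m + 1, w => calc
      ediam (cylinder f s (m + 1) w) ≤ K (w 0) * ediam (cylinder f s m (Fin.tail w)) :=
        (hf _).ediam_image_le _
      _ ≤ K (w 0) * ((∏ i, (K (Fin.tail w i) : ℝ≥0∞)) * ediam s) := by
        gcongr; exact ediam_cylinder_le hf s _
      _ = (∏ i, (K (w i) : ℝ≥0∞)) * ediam s := by
        rw [Fin.prod_univ_succ, mul_assoc]; rfl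

variable [Fintype ι]

theorem sum_ediam_cylinder_rpow_le (hf : ∀ k, LipschitzWith (K k) (f k)) {R : ℝ} (hR : 0 ≤ R)
    (hK : ∑ k, (K k : ℝ≥0∞) ^ R ≤ 1) (s : Set X) (m : ℕ) :
    ∑ w : Fin m → ι, ediam (cylinder f s m w) ^ R ≤ ediam s ^ R := calc
  _ ≤ ∑ w : Fin m → ι, (∏ i, (K (w i) : ℝ≥0∞) ^ R) * ediam s ^ R := by
    gcongr with w
    rw [ENNReal.prod_rpow_of_nonneg hR, ← ENNReal.mul_rpow_of_nonneg _ _ hR]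
    gcongr
    exact ediam_cylinder_le hf s w
  _ = (∑ k, (K k : ℝ≥0∞) ^ R) ^ m * ediam s ^ R := by
    rw [← Finset.sum_mul, Fintype.sum_pow]
  _ ≤ ediam s ^ R := mul_le_of_le_one_left' (pow_le_one' hK m)

theorem hausdorffMeasure_le_ediam_rpow [MeasurableSpace X] [BorelSpace X]
    (hf : ∀ k, LipschitzWith (K k) (f k)) (hK₁ : ∀ k, K k < 1) {R : ℝ} (hR : 0 ≤ R)
    (hK : ∑ k, (K k : ℝ≥0∞) ^ R ≤ 1) {s : Set X} (hs : ediam s ≠ ∞)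
    (h : s ⊆ ⋃ k, f k '' s) : μH[R] s ≤ ediam s ^ R := by
  set ρ : ℝ≥0 := Finset.univ.sup K
  have hρ : ρ < 1 := (Finset.sup_lt_iff zero_lt_one).2 fun k _ => hK₁ k
  have hdiam (m : ℕ) (w : Fin m → ι) : ediam (cylinder f s m w) ≤ (ρ : ℝ≥0∞) ^ m * ediam s := by
    refine (ediam_cylinder_le hf s w).trans ?_
    gcongr
    simpa using Finset.prod_le_pow_card Finset.univ (fun i => (K (w i) : ℝ≥0∞)) ρ fun i _ =>
      ENNReal.coe_le_coe.2 (Finset.le_sup (f := K) (Finset.mem_univ (w i)))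
  have hmesh : Tendsto (fun m : ℕ => (ρ : ℝ≥0∞) ^ m * ediam s) atTop (𝓝 0) := by
    simpa using ENNReal.Tendsto.mul_const
      (ENNReal.tendsto_pow_atTop_nhds_zero_of_lt_one (ENNReal.coe_lt_one_iff.2 hρ)) (.inr hs)
  calc μH[R] s ≤ liminf (fun m => ∑ w : Fin m → ι, ediam (cylinder f s m w) ^ R) atTop :=
        MeasureTheory.Measure.hausdorffMeasure_le_liminf_sum R s _ hmesh _ (.of_forall hdiam)
          (.of_forall (subset_iUnion_cylinder h))
    _ ≤ ediam s ^ R := liminf_le_of_frequently_le'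
        (.of_forall (sum_ediam_cylinder_rpow_le hf hR hK s))

theorem dimH_le_of_subset_iUnion_image (hf : ∀ k, LipschitzWith (K k) (f k))
    (hK₁ : ∀ k, K k < 1) {R : ℝ} (hR : 0 ≤ R) (hK : ∑ k, (K k : ℝ≥0∞) ^ R ≤ 1) {s : Set X}
    (hs : ediam s ≠ ∞) (h : s ⊆ ⋃ k, f k '' s) : dimH s ≤ ENNReal.ofReal R := by
  borelize X
  refine dimH_le_of_hausdorffMeasure_ne_top (d := R.toNNReal) ?_
  rw [Real.coe_toNNReal R hR]
  exact ne_top_of_le_ne_top (ENNReal.rpow_ne_top_of_nonneg hR hs)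
    (hausdorffMeasure_le_ediam_rpow hf hK₁ hR hK hs h)

end Cylinder

theorem nonneg_of_sum_rpow_eq_one {ι : Type*} [Fintype ι] {C : ι → ℝ} (hC₀ : ∀ k, 0 < C k)
    (hC₁ : ∀ k, C k < 1) {R : ℝ} (h : ∑ k, C k ^ R = 1) : 0 ≤ R := by
  by_contra! hR
  obtain ⟨k, -, -⟩ := Finset.exists_ne_zero_of_sum_ne_zero (h.trans_ne one_ne_zero)
  have hk : 1 < C k ^ R := Real.one_lt_rpow_of_pos_of_lt_one_of_neg (hC₀ k) (hC₁ k) hR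
  have := Finset.single_le_sum (fun j _ => (Real.rpow_pos_of_pos (hC₀ j) R).le)
    (Finset.mem_univ k)
  linarith

theorem dist_eq_Dmetric_ofLp (p q : WithLp 1 (ℝ × ℂ)) : dist p q = Dmetric (ofLp p) (ofLp q) := by
  rw [prod_dist_eq_of_L1, Dmetric, Real.dist_eq, dist_eq_norm]
  rfl

theorem lipschitzWith_toLp_one_comp {g : ℝ × ℂ → ℝ × ℂ} {K : ℝ≥0}
    (hg : ∀ p q, Dmetric (g p) (g q) ≤ K * Dmetric p q) :
    LipschitzWith K (toLp 1 ∘ g ∘ @ofLp 1 (ℝ × ℂ)) :=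
  .of_dist_le_mul fun p q => by
    simpa only [dist_eq_Dmetric_ofLp, Function.comp_apply, ofLp_toLp] using
      hg (ofLp p) (ofLp q)

theorem dimH_attractor_upper_bound_general
    (n : ℕ) (x : Fin (n + 1) → ℝ)
    (W : Fin n → ℝ × ℂ → ℝ × ℂ) (c C : Fin n → ℝ)
    (hc : ∀ k, 0 < c k) (hcC : ∀ k, c k ≤ C k) (hC : ∀ k, C k < 1)
    (hbilip : ∀ k, ∀ p q : ℝ × ℂ,
      c k * Dmetric p q ≤ Dmetric (W k p) (W k q) ∧
      Dmetric (W k p) (W k q) ≤ C k * Dmetric p q)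
    (F : ℝ → ℂ) (hF : ContinuousOn F (Icc (x 0) (x (Fin.last n))))
    (G : Set (ℝ × ℂ)) (hG : G = Set.graphOn F (Icc (x 0) (x (Fin.last n))))
    (hattr : G = ⋃ k, W k '' G)
    (R : ℝ) (hR : ∑ k, C k ^ R = 1) :
    dimH G ≤ ENNReal.ofReal R := by
  have hC₀ k : 0 < C k := (hc k).trans_le (hcC k)
  have hR₀ : 0 ≤ R := nonneg_of_sum_rpow_eq_one hC₀ hC hR
  have hlip k : LipschitzWith (C k).toNNReal (toLp 1 ∘ W k ∘ @ofLp 1 (ℝ × ℂ)) :=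
    lipschitzWith_toLp_one_comp fun p q => by
      simpa only [Real.coe_toNNReal _ (hC₀ k).le] using (hbilip k p q).2
  have hsum : ∑ k, ENNReal.ofReal (C k) ^ R ≤ 1 := by
    simp_rw [ENNReal.ofReal_rpow_of_nonneg (hC₀ _).le hR₀,
      ← ENNReal.ofReal_sum_of_nonneg fun k _ => (Real.rpow_pos_of_pos (hC₀ k) R).le, hR,
      ENNReal.ofReal_one, le_refl]
  have hGc : IsCompact G := hG ▸ isCompact_Icc.image_of_continuousOn (continuousOn_id.prodMk hF)
  have hbdd : ediam (toLp 1 '' G) ≠ ∞ :=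
    (hGc.image (prod_lipschitzWith_toLp 1 ℝ ℂ).continuous).isBounded.ediam_ne_top
  have hcover : toLp 1 '' G ⊆ ⋃ k, (toLp 1 ∘ W k ∘ @ofLp 1 (ℝ × ℂ)) '' (toLp 1 '' G) := by
    conv_lhs => rw [hattr]
    simp only [image_iUnion, image_image, Function.comp_apply, subset_refl]
  calc dimH G = dimH (ofLp '' (toLp 1 '' G)) := by rw [image_image]; simp
    _ ≤ dimH (toLp 1 '' G) := (prod_lipschitzWith_ofLp 1 ℝ ℂ).dimH_image_le _
    _ ≤ ENNReal.ofReal R := dimH_le_of_subset_iUnion_image hlip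
        (fun k => Real.toNNReal_lt_one.2 (hC k)) hR₀ hsum hbdd hcover

/-- upper bound for the Hausdorff dimension of the attractor `G` of an
IFS on `J × ℂ` with bi-Lipschitz bounds `cₖ D(p,q) ≤ D(Wₖ p, Wₖ q) ≤ Cₖ D(p,q)` :
if `∑ₖ Cₖ ^ R = 1` then `dimH G ≤ R`. -/
theorem dimH_attractor_upper_bound
    (n : ℕ) (hn : 1 ≤ n) (x : Fin (n + 1) → ℝ) (hx : StrictMono x)
    (W : Fin n → ℝ × ℂ → ℝ × ℂ) (c C : Fin n → ℝ)
    (hc : ∀ k, 0 < c k) (hcC : ∀ k, c k ≤ C k) (hC : ∀ k, C k < 1)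
    (hbilip : ∀ k, ∀ p q : ℝ × ℂ,
      c k * Dmetric p q ≤ Dmetric (W k p) (W k q) ∧
      Dmetric (W k p) (W k q) ≤ C k * Dmetric p q)
    (F : ℝ → ℂ) (hF : ContinuousOn F (Icc (x 0) (x (Fin.last n))))
    (G : Set (ℝ × ℂ)) (hG : G = Set.graphOn F (Icc (x 0) (x (Fin.last n))))
    (hattr : G = ⋃ k, W k '' G)
    (R : ℝ) (hR : ∑ k, C k ^ R = 1) :
    dimH G ≤ ENNReal.ofReal R :=
  dimH_attractor_upper_bound_general n x W c C hc hcC hC hbilip F hF G hG hattr R hR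
end
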